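/- arXiv:1707.02638 — 3 statements merged into one kernel-verified Lean document; each statement's English description precedes it below -/
import Mathlib

section
/- Let G be a bipartite graph with bipartition (L, R), let k be a positive integer, and let Ḡ be the graph obtained from G by cliquifying L and then cliquifying R. If Ḡ has a path decomposition of width at most k − 1, then L and R belong to the same connected component of R_k(G); moreover, there exists a monotone reconfiguration sequence from L to R in R_k(G). -/
/-!
Cliquifying makes `L` and `R` cliques of `Ḡ`, so each lies in a single bag, say `L ⊆ B a` and
`R ⊆ B b` with `a ≤ b` (reversing the decomposition if necessary). Sweep the bags from `a` to `b`:
add each vertex of `R` at the first bag where it appears and remove each vertex of `L` after the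
last bag where it appears. Every edge of `G` lies in a bag, so its `R`-end is added before its
`L`-end is removed; and at every moment the current set lies inside one bag, so it has at most `k`
vertices. Each vertex is toggled exactly once.
-/

/-- A set of vertices is a vertex cover of `G` if it contains at least one
endpoint of every edge. -/
def IsVC {α : Type*} (G : SimpleGraph α) (S : Finset α) : Prop :=
  ∀ ⦃u v : α⦄, G.Adj u v → u ∈ S ∨ v ∈ S

/-- A reconfiguration sequence in `R_k(G)` from `S` to `T`. -/
def ReconfSeq {α : Type*} [DecidableEq α] (G : SimpleGraph α) (k : ℕ) (S T : Finset α)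
    (t : ℕ) (Q : ℕ → Finset α) : Prop :=
  Q 0 = S ∧ Q t = T ∧ (∀ i ≤ t, IsVC G (Q i) ∧ (Q i).card ≤ k) ∧
    ∀ i < t, (symmDiff (Q i) (Q (i + 1))).card = 1

/-- A reconfiguration sequence is monotone if every vertex changes its
membership at most once over the whole sequence. -/
def MonotoneSeq {α : Type*} [DecidableEq α] (t : ℕ) (Q : ℕ → Finset α) : Prop :=
  ∀ v : α, ((Finset.range t).filter (fun i => v ∈ symmDiff (Q i) (Q (i + 1)))).card ≤ 1

/-- Cliquifying a vertex subset `S` of `G`: add all missing edges between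
vertices of `S`. -/
def cliquify {α : Type*} [DecidableEq α] (G : SimpleGraph α) (S : Finset α) :
    SimpleGraph α where
  Adj u v := (G.Adj u v ∨ (u ∈ S ∧ v ∈ S)) ∧ u ≠ v
  symm := by
    constructor
    intro u v h
    exact ⟨h.1.elim (fun h' => Or.inl h'.symm) (fun h' => Or.inr ⟨h'.2, h'.1⟩), h.2.symm⟩
  loopless := by constructor; intro u h; exact h.2 rfl

/-- `B 0, …, B (p-1)` is a path decomposition of `G`. -/
structure PathDecomp {α : Type*} (G : SimpleGraph α) (p : ℕ) (B : ℕ → Finset α) : Prop where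
  mem_bag : ∀ v : α, ∃ i, i < p ∧ v ∈ B i
  edge_bag : ∀ ⦃u v : α⦄, G.Adj u v → ∃ i, i < p ∧ u ∈ B i ∧ v ∈ B i
  interval : ∀ (v : α) (i j l : ℕ), i ≤ j → j ≤ l → l < p → v ∈ B i → v ∈ B l → v ∈ B j

namespace PathDecomp

variable {V : Type*} {G H : SimpleGraph V} {p : ℕ} {B : ℕ → Finset V}

lemma mono (hB : PathDecomp H p B) (hGH : G ≤ H) : PathDecomp G p B where
  mem_bag := hB.mem_bag
  edge_bag _ _ h := hB.edge_bag (hGH h)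
  interval := hB.interval

lemma reverse (hB : PathDecomp H p B) : PathDecomp H p (fun i => B (p - 1 - i)) where
  mem_bag v := by
    obtain ⟨i, hi, hv⟩ := hB.mem_bag v
    exact ⟨p - 1 - i, by omega, by rwa [show p - 1 - (p - 1 - i) = i by omega]⟩
  edge_bag u v h := by
    obtain ⟨i, hi, hu, hv⟩ := hB.edge_bag h
    exact ⟨p - 1 - i, by omega, by rwa [show p - 1 - (p - 1 - i) = i by omega],
      by rwa [show p - 1 - (p - 1 - i) = i by omega]⟩
  interval v i j l hij hjl hl hi hl' :=
    hB.interval v (p - 1 - l) (p - 1 - j) (p - 1 - i) (by omega) (by omega) (by omega) hl' hi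

lemma mem_of_mem_of_mem (hB : PathDecomp H p B) {v : V} {i j l : ℕ} (hip : i < p) (hlp : l < p)
    (hi : v ∈ B i) (hl : v ∈ B l) (hij : min i l ≤ j) (hjl : j ≤ max i l) : v ∈ B j := by
  rcases le_total i l with h | h
  · exact hB.interval v i j l (by omega) (by omega) hlp hi hl
  · exact hB.interval v l j i (by omega) (by omega) hip hl hi

end PathDecomp

section Bags

variable {V : Type*}

noncomputable def firstBagFrom (B : ℕ → Finset V) (a : ℕ) (v : V) : ℕ :=
  sInf {j | a ≤ j ∧ v ∈ B j}

variable [DecidableEq V]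

def lastBagUpTo (B : ℕ → Finset V) (b : ℕ) (v : V) : ℕ :=
  Nat.findGreatest (fun j => v ∈ B j) b

variable {B : ℕ → Finset V} {v : V} {a b j : ℕ}

omit [DecidableEq V] in
lemma firstBagFrom_le (haj : a ≤ j) (hv : v ∈ B j) : firstBagFrom B a v ≤ j :=
  Nat.sInf_le ⟨haj, hv⟩

omit [DecidableEq V] in
lemma le_firstBagFrom_and_mem (haj : a ≤ j) (hv : v ∈ B j) :
    a ≤ firstBagFrom B a v ∧ v ∈ B (firstBagFrom B a v) :=
  Nat.sInf_mem (s := {j | a ≤ j ∧ v ∈ B j}) ⟨j, haj, hv⟩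

lemma le_lastBagUpTo (hjb : j ≤ b) (hv : v ∈ B j) : j ≤ lastBagUpTo B b v :=
  Nat.le_findGreatest hjb hv

lemma lastBagUpTo_le : lastBagUpTo B b v ≤ b := Nat.findGreatest_le b

lemma mem_lastBagUpTo (hjb : j ≤ b) (hv : v ∈ B j) : v ∈ B (lastBagUpTo B b v) :=
  Nat.findGreatest_spec (P := fun j => v ∈ B j) hjb hv

end Bags

lemma PathDecomp.exists_subset_bag_of_isClique {V : Type*} [Nonempty V] {H : SimpleGraph V}
    {p : ℕ} {B : ℕ → Finset V} (hB : PathDecomp H p B) {S : Finset V}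
    (hS : H.IsClique (S : Set V)) : ∃ i < p, S ⊆ B i := by
  rcases S.eq_empty_or_nonempty with rfl | hne
  · obtain ⟨i, hi, -⟩ := hB.mem_bag (Classical.arbitrary V)
    exact ⟨i, hi, Finset.empty_subset _⟩
  -- Helly property: the first bag of the vertex of `S` that appears latest contains all of `S`
  obtain ⟨w, hw, hmax⟩ := S.exists_max_image (firstBagFrom B 0) hne
  obtain ⟨iw, hiw, hw'⟩ := hB.mem_bag w
  have hwp : firstBagFrom B 0 w < p := (firstBagFrom_le (Nat.zero_le _) hw').trans_lt hiw
  refine ⟨_, hwp, fun v hv => ?_⟩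
  obtain ⟨iv, hiv, hv'⟩ := hB.mem_bag v
  have hvfirst := (le_firstBagFrom_and_mem (Nat.zero_le _) hv').2
  by_cases hvw : v = w
  · exact hvw ▸ hvfirst
  obtain ⟨j, hj, hvj, hwj⟩ := hB.edge_bag (hS hv hw hvw)
  exact hB.interval v _ _ j (hmax v hv) (firstBagFrom_le (Nat.zero_le _) hwj) hj hvfirst hvj

section Flip

variable {V : Type*}

lemma exists_nodup_pairwise_le [Fintype V] (key : V → ℕ) :
    ∃ l : List V, l.Nodup ∧ (∀ v, v ∈ l) ∧ l.Pairwise (fun x y => key x ≤ key y) := by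
  let l := Finset.univ.toList.mergeSort (fun x y => decide (key x ≤ key y))
  have hperm : l.Perm Finset.univ.toList := List.mergeSort_perm _ _
  refine ⟨l, hperm.nodup_iff.mpr (Finset.nodup_toList _), fun v => hperm.mem_iff.mpr (by simp), ?_⟩
  refine (List.pairwise_mergeSort ?_ ?_ _).imp (of_decide_eq_true ·)
  · simp only [decide_eq_true_eq]; omega
  · simp only [Bool.or_eq_true, decide_eq_true_eq]; omega

variable [DecidableEq V]

def flipSeq (L : Finset V) (l : List V) (i : ℕ) : Finset V :=
  symmDiff L (l.take i).toFinset

variable {L : Finset V} {l : List V}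

lemma flipSeq_zero : flipSeq L l 0 = L := by
  simp [flipSeq]

lemma flipSeq_length [Fintype V] (hl : ∀ v, v ∈ l) : flipSeq L l l.length = Lᶜ := by
  ext v
  simp [flipSeq, Finset.mem_symmDiff, hl]

lemma symmDiff_flipSeq_succ (hl : l.Nodup) {i : ℕ} (hi : i < l.length) :
    symmDiff (flipSeq L l i) (flipSeq L l (i + 1)) = {l[i]} := by
  have hnew : l[i] ∉ l.take i := by
    have hnd : (l.take (i + 1)).Nodup := hl.sublist (List.take_sublist _ _)
    rw [List.take_add_one, List.getElem?_eq_getElem hi] at hnd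
    exact fun h => (List.nodup_append.mp hnd).2.2 _ h _ (List.mem_singleton_self _) rfl
  rw [flipSeq, flipSeq, symmDiff_symmDiff_symmDiff_comm, symmDiff_self, bot_symmDiff,
    List.take_add_one, List.getElem?_eq_getElem hi]
  ext x
  simp only [Finset.mem_symmDiff, List.toFinset_append, Finset.mem_union, List.mem_toFinset,
    Option.toList_some, List.mem_singleton, Finset.mem_singleton]
  constructor
  · tauto
  · rintro rfl
    exact Or.inr ⟨Or.inr rfl, hnew⟩

lemma monotoneSeq_flipSeq (hl : l.Nodup) : MonotoneSeq l.length (flipSeq L l) := by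
  intro v
  refine Finset.card_le_one.mpr fun i hi j hj => ?_
  simp only [Finset.mem_filter, Finset.mem_range] at hi hj
  rw [symmDiff_flipSeq_succ hl hi.1, Finset.mem_singleton] at hi
  rw [symmDiff_flipSeq_succ hl hj.1, Finset.mem_singleton] at hj
  exact (hl.getElem_inj_iff).mp (hi.2.symm.trans hj.2)

theorem exists_monotone_reconfSeq_of_key [Fintype V] (G : SimpleGraph V) (k : ℕ) (key : V → ℕ)
    (hgood : ∀ T : Finset V, (∀ x ∈ T, ∀ y ∉ T, key x ≤ key y) →
      IsVC G (symmDiff L T) ∧ (symmDiff L T).card ≤ k) :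
    ∃ t Q, ReconfSeq G k L Lᶜ t Q ∧ MonotoneSeq t Q := by
  obtain ⟨l, hnd, hall, hsorted⟩ := exists_nodup_pairwise_le key
  have hinitial (i : ℕ) : ∀ x ∈ (l.take i).toFinset, ∀ y ∉ (l.take i).toFinset, key x ≤ key y := by
    intro x hx y hy
    refine hsorted.rel_of_mem_take_of_mem_drop (List.mem_toFinset.mp hx) ?_
    have := List.take_append_drop i l ▸ hall y
    exact (List.mem_append.mp this).resolve_left (mt List.mem_toFinset.mpr hy)
  refine ⟨l.length, flipSeq L l, ⟨flipSeq_zero, flipSeq_length hall,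
    fun i _ => hgood _ (hinitial i), fun i hi => ?_⟩, monotoneSeq_flipSeq hnd⟩
  rw [symmDiff_flipSeq_succ hnd hi, Finset.card_singleton]

end Flip

section Cliquify

variable {V : Type*} [DecidableEq V]

lemma le_cliquify (G : SimpleGraph V) (S : Finset V) : G ≤ cliquify G S :=
  fun _ _ h => ⟨Or.inl h, h.ne⟩

lemma isClique_cliquify (G : SimpleGraph V) (S : Finset V) :
    (cliquify G S).IsClique (S : Set V) :=
  fun _ hu _ hv huv => ⟨Or.inr ⟨hu, hv⟩, huv⟩

end Cliquify

section BipartiteKey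

variable {V : Type*} [DecidableEq V] {G : SimpleGraph V} {L R T : Finset V}

lemma isVC_symmDiff_of_key (key : V → ℕ) (hdisj : Disjoint L R)
    (hbip : ∀ ⦃u v : V⦄, G.Adj u v → (u ∈ L ∧ v ∈ R) ∨ (u ∈ R ∧ v ∈ L))
    (hkey : ∀ ⦃u v : V⦄, G.Adj u v → u ∈ L → v ∈ R → key v < key u)
    (hT : ∀ x ∈ T, ∀ y ∉ T, key x ≤ key y) : IsVC G (symmDiff L T) := by
  have hcross ⦃u v : V⦄ (huv : G.Adj u v) (hu : u ∈ L) (hv : v ∈ R) :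
      u ∈ symmDiff L T ∨ v ∈ symmDiff L T := by
    simp only [Finset.mem_symmDiff]
    by_cases huT : u ∈ T
    · have hvT : v ∈ T := by_contra fun hvT => (hkey huv hu hv).not_ge (hT u huT v hvT)
      exact Or.inr (Or.inr ⟨hvT, Finset.disjoint_right.mp hdisj hv⟩)
    · exact Or.inl (Or.inl ⟨hu, huT⟩)
  intro u v huv
  rcases hbip huv with ⟨hu, hv⟩ | ⟨hu, hv⟩
  · exact hcross huv hu hv
  · exact (hcross huv.symm hv hu).symm

variable {p a b : ℕ} {B : ℕ → Finset V}

/-- Toggling order: a vertex of `R` is added at the first bag of `[a, b]` containing it, a vertex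
of `L` is removed right after the last one; the doubling interleaves the two. -/
noncomputable def bagKey (B : ℕ → Finset V) (a b : ℕ) (L : Finset V) (v : V) : ℕ :=
  if v ∈ L then 2 * lastBagUpTo B b v + 1 else 2 * firstBagFrom B a v

lemma bagKey_lt_of_adj (hB : PathDecomp G p B) (hab : a ≤ b) (hbp : b < p) (hLa : L ⊆ B a)
    (hRb : R ⊆ B b) (hdisj : Disjoint L R) ⦃u v : V⦄ (huv : G.Adj u v) (hu : u ∈ L)
    (hv : v ∈ R) : bagKey B a b L v < bagKey B a b L u := by
  obtain ⟨j, hj, huj, hvj⟩ := hB.edge_bag huv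
  -- clamping a common bag of `u` and `v` into `[a, b]` keeps it common
  have huc : u ∈ B (min b (max a j)) :=
    hB.mem_of_mem_of_mem (hab.trans_lt hbp) hj (hLa hu) huj (by omega) (by omega)
  have hvc : v ∈ B (min b (max a j)) :=
    hB.mem_of_mem_of_mem hbp hj (hRb hv) hvj (by omega) (by omega)
  have hfirst : firstBagFrom B a v ≤ min b (max a j) := firstBagFrom_le (by omega) hvc
  have hlast : min b (max a j) ≤ lastBagUpTo B b u := le_lastBagUpTo (by omega) huc
  rw [bagKey, bagKey, if_pos hu, if_neg (Finset.disjoint_right.mp hdisj hv)]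
  omega

lemma symmDiff_subset_bag (hB : PathDecomp G p B) (hab : a ≤ b) (hbp : b < p) (hLa : L ⊆ B a)
    (hRb : R ⊆ B b) (hcover : ∀ v : V, v ∈ L ∨ v ∈ R)
    (hT : ∀ x ∈ T, ∀ y ∉ T, bagKey B a b L x ≤ bagKey B a b L y) :
    symmDiff L T ⊆ B (min b (max a (T.sup (bagKey B a b L) / 2))) := by
  intro v hv
  rcases Finset.mem_symmDiff.mp hv with ⟨hvL, hvT⟩ | ⟨hvT, hvL⟩
  · have hc : T.sup (bagKey B a b L) ≤ bagKey B a b L v := Finset.sup_le fun x hx => hT x hx v hvT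
    rw [bagKey, if_pos hvL] at hc
    have ha := le_lastBagUpTo hab (hLa hvL)
    have hb : lastBagUpTo B b v ≤ b := lastBagUpTo_le
    exact hB.mem_of_mem_of_mem (hab.trans_lt hbp) (hb.trans_lt hbp) (hLa hvL)
      (mem_lastBagUpTo hab (hLa hvL)) (by omega) (by omega)
  · have hc : bagKey B a b L v ≤ T.sup (bagKey B a b L) := Finset.le_sup hvT
    rw [bagKey, if_neg hvL] at hc
    have hvR := (hcover v).resolve_left hvL
    obtain ⟨ha, hfirst⟩ := le_firstBagFrom_and_mem hab (hRb hvR)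
    have hb := firstBagFrom_le hab (hRb hvR)
    exact hB.mem_of_mem_of_mem (hb.trans_lt hbp) hbp hfirst (hRb hvR) (by omega) (by omega)

theorem exists_monotone_reconfSeq_of_subset_bags [Fintype V] (k : ℕ) (hB : PathDecomp G p B)
    (hwidth : ∀ i < p, (B i).card ≤ k) (hcover : ∀ v : V, v ∈ L ∨ v ∈ R)
    (hdisj : Disjoint L R) (hbip : ∀ ⦃u v : V⦄, G.Adj u v → (u ∈ L ∧ v ∈ R) ∨ (u ∈ R ∧ v ∈ L))
    (hab : a ≤ b) (hbp : b < p) (hLa : L ⊆ B a) (hRb : R ⊆ B b) :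
    ∃ t Q, ReconfSeq G k L R t Q ∧ MonotoneSeq t Q := by
  have hR : Lᶜ = R := by
    ext v
    rw [Finset.mem_compl]
    exact ⟨(hcover v).resolve_left, fun hv hvL => Finset.disjoint_left.mp hdisj hvL hv⟩
  rw [← hR]
  refine exists_monotone_reconfSeq_of_key G k (bagKey B a b L) fun T hT =>
    ⟨isVC_symmDiff_of_key _ hdisj hbip (bagKey_lt_of_adj hB hab hbp hLa hRb hdisj) hT, ?_⟩
  exact (Finset.card_le_card (symmDiff_subset_bag hB hab hbp hLa hRb hcover hT)).trans
    (hwidth _ (by omega))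

end BipartiteKey

theorem stmt1_general {V : Type} [Fintype V] [DecidableEq V] (G : SimpleGraph V)
    (k : ℕ) (L R : Finset V)
    (hcover : ∀ v : V, v ∈ L ∨ v ∈ R) (hdisj : Disjoint L R)
    (hbip : ∀ ⦃u v : V⦄, G.Adj u v → (u ∈ L ∧ v ∈ R) ∨ (u ∈ R ∧ v ∈ L))
    (p : ℕ) (B : ℕ → Finset V)
    (hPD : PathDecomp (cliquify (cliquify G L) R) p B)
    (hwidth : ∀ i < p, (B i).card ≤ k) :
    ∃ t Q, ReconfSeq G k L R t Q ∧ MonotoneSeq t Q := by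
  rcases isEmpty_or_nonempty V with hV | hV
  · obtain rfl : L = R := Subsingleton.elim _ _
    refine ⟨0, fun _ => L, ⟨rfl, rfl, fun _ _ => ⟨fun u => isEmptyElim u, ?_⟩,
      fun _ h => absurd h (Nat.not_lt_zero _)⟩, by simp [MonotoneSeq]⟩
    simp [Finset.eq_empty_of_isEmpty L]
  have hG : G ≤ cliquify (cliquify G L) R := (le_cliquify G L).trans (le_cliquify _ R)
  obtain ⟨a, ha, hLa⟩ :=
    hPD.exists_subset_bag_of_isClique ((isClique_cliquify G L).mono (le_cliquify _ R))
  obtain ⟨b, hb, hRb⟩ := hPD.exists_subset_bag_of_isClique (isClique_cliquify _ R)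
  rcases le_total a b with hab | hba
  · exact exists_monotone_reconfSeq_of_subset_bags k (hPD.mono hG) hwidth hcover hdisj hbip
      hab hb hLa hRb
  have hrev (i : ℕ) (hi : i < p) : B (p - 1 - (p - 1 - i)) = B i := by
    rw [Nat.sub_sub_self (by omega)]
  exact exists_monotone_reconfSeq_of_subset_bags k (hPD.reverse.mono hG)
    (fun i hi => hwidth _ (by omega)) hcover hdisj hbip (a := p - 1 - a) (b := p - 1 - b)
    (by omega) (by omega) (hrev a ha ▸ hLa) (hrev b hb ▸ hRb)

/-- Let `G` be bipartite with bipartition `(L, R)` and let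
`Ḡ` be obtained from `G` by cliquifying `L` and then `R`.  If `Ḡ` has a path
decomposition of width at most `k - 1`, then there exists a monotone
reconfiguration sequence from `L` to `R` in `R_k(G)` (in particular `L` and
`R` lie in the same connected component of `R_k(G)`). -/
theorem stmt1 {V : Type} [Fintype V] [DecidableEq V] (G : SimpleGraph V)
    (k : ℕ) (hk : 0 < k) (L R : Finset V)
    (hcover : ∀ v : V, v ∈ L ∨ v ∈ R) (hdisj : Disjoint L R)
    (hbip : ∀ ⦃u v : V⦄, G.Adj u v → (u ∈ L ∧ v ∈ R) ∨ (u ∈ R ∧ v ∈ L))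
    (p : ℕ) (B : ℕ → Finset V)
    (hPD : PathDecomp (cliquify (cliquify G L) R) p B)
    (hwidth : ∀ i < p, (B i).card ≤ k) :
    ∃ t Q, ReconfSeq G k L R t Q ∧ MonotoneSeq t Q :=
  stmt1_general G k L R hcover hdisj hbip p B hPD hwidth
end

section
/- Let G be an n-vertex bipartite graph, k a positive integer, S* a fixed vertex cover of G, H the perturbation of G with respect to S*, and μ = 2nk + 2n − 1. For all vertex covers S and T of G of size at most k: if dist_{R_k(G)}(S, T) is finite, then dist_{R_μ(H)}(f(S), f(T)) is finite and dist_{R_k(G)}(S, T) ≤ dist_{R_μ(H)}(f(S), f(T)) ≤ (2n + 1) · dist_{R_k(G)}(S, T). -/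
/-- Vertex type of the perturbation `H` of an `n`-vertex graph `G` with respect
to `S*`: each vertex `v ∈ S*` gets `2n` twin copies and each `v ∉ S*` gets
`2n + 1` twin copies. -/
abbrev PV (V : Type) [DecidableEq V] (n : ℕ) (Sstar : Finset V) : Type :=
  {p : V × Fin (2 * n + 1) // p.1 ∈ Sstar → (p.2 : ℕ) < 2 * n}

/-- The perturbation `H` of `G` with respect to `S*`: a copy of `u` and a copy
of `v` are adjacent iff `uv` is an edge of `G` (in particular copies of the
same vertex are non-adjacent). -/
def perturb {V : Type} [DecidableEq V] (G : SimpleGraph V) (n : ℕ) (Sstar : Finset V) :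
    SimpleGraph (PV V n Sstar) where
  Adj p q := G.Adj p.1.1 q.1.1
  symm := ⟨fun _ _ h => G.symm.symm _ _ h⟩
  loopless := ⟨fun _ h => G.loopless.irrefl _ h⟩

/-- `f(v)`: the set of copies of `v` in the perturbation. -/
def fcopy {V : Type} [DecidableEq V] [Fintype V] (n : ℕ) (Sstar : Finset V) (v : V) :
    Finset (PV V n Sstar) :=
  Finset.univ.filter (fun p => p.1.1 = v)

/-- `f(X) = ⋃_{v ∈ X} f(v)`. -/
def fset {V : Type} [DecidableEq V] [Fintype V] (n : ℕ) (Sstar : Finset V) (X : Finset V) :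
    Finset (PV V n Sstar) :=
  Finset.univ.filter (fun p => p.1.1 ∈ X)

/-- `f⁻¹(X̂) = {v : f(v) ⊆ X̂}`. -/
def finv {V : Type} [DecidableEq V] [Fintype V] (n : ℕ) (Sstar : Finset V)
    (Xh : Finset (PV V n Sstar)) : Finset V :=
  Finset.univ.filter (fun v => fcopy n Sstar v ⊆ Xh)

/-- `S` and `T` lie in the same connected component of `R_k(G)`. -/
def SameComp {α : Type*} [DecidableEq α] (G : SimpleGraph α) (k : ℕ) (S T : Finset α) : Prop :=
  ∃ t Q, ReconfSeq G k S T t Q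

/-- `distR G k S T` : the length of a shortest reconfiguration sequence from
`S` to `T` in `R_k(G)` (`⊤` if none exists). -/
noncomputable def distR {α : Type*} [DecidableEq α] (G : SimpleGraph α) (k : ℕ)
    (S T : Finset α) : ℕ∞ :=
  sInf {m : ℕ∞ | ∃ t : ℕ, (t : ℕ∞) = m ∧ ∃ Q : ℕ → Finset α, ReconfSeq G k S T t Q}

/-!
Write `μ = 2nk + 2n - 1`. A step `X → X ∪ {v}` of `R_k(G)` is simulated in `R_μ(H)` by adding the
at most `2n + 1` copies of `v` one at a time: every intermediate set contains `f(X)`, so it is a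
vertex cover, and has at most `|f(X ∪ {v})| ≤ 2nk + |X ∪ {v}| ≤ 2nk + n ≤ μ` elements.

Conversely `f⁻¹` sends vertex covers of `H` to vertex covers of `G`, and since every fibre `f(v)`
has at least `2n` elements, a set of size at most `μ < 2n(k + 1)` contains at most `k` full fibres.
One change in `H` changes `f⁻¹` by at most one vertex and `f⁻¹(f(X)) = X`, so every reconfiguration
sequence from `f(S)` to `f(T)` projects to one from `S` to `T` that is no longer.
-/

section Reconfiguration

lemma IsVC.mono {α : Type*} {G : SimpleGraph α} {A B : Finset α} (h : IsVC G A) (hAB : A ⊆ B) :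
    IsVC G B :=
  fun _ _ huv => (h huv).imp (@hAB _) (@hAB _)

variable {α β : Type*} [DecidableEq α] [DecidableEq β] {G : SimpleGraph α} {k : ℕ}

lemma card_symmDiff_eq_one_iff {X Y : Finset α} :
    (symmDiff X Y).card = 1 ↔ (X ⊆ Y ∧ (Y \ X).card = 1) ∨ (Y ⊆ X ∧ (X \ Y).card = 1) := by
  have hcard : (symmDiff X Y).card = (X \ Y).card + (Y \ X).card :=
    Finset.card_union_of_disjoint disjoint_sdiff_sdiff
  simp only [hcard, ← Finset.sdiff_eq_empty_iff_subset, ← Finset.card_eq_zero]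
  omega

namespace ReconfSeq

lemma refl {X : Finset α} (hX : IsVC G X ∧ X.card ≤ k) : ReconfSeq G k X X 0 (fun _ => X) :=
  ⟨rfl, rfl, fun _ _ => hX, fun _ hi => absurd hi (Nat.not_lt_zero _)⟩

lemma single {X Y : Finset α} (hX : IsVC G X ∧ X.card ≤ k) (hY : IsVC G Y ∧ Y.card ≤ k)
    (hXY : (symmDiff X Y).card = 1) :
    ReconfSeq G k X Y 1 (fun i => if i = 0 then X else Y) := by
  refine ⟨rfl, rfl, fun i _ => ?_, fun i hi => ?_⟩
  · dsimp only
    split_ifs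
    exacts [hX, hY]
  · obtain rfl : i = 0 := by omega
    simpa using hXY

lemma append {S M T : Finset α} {t₁ t₂ : ℕ} {Q₁ Q₂ : ℕ → Finset α}
    (h₁ : ReconfSeq G k S M t₁ Q₁) (h₂ : ReconfSeq G k M T t₂ Q₂) :
    ReconfSeq G k S T (t₁ + t₂) (fun i => if i ≤ t₁ then Q₁ i else Q₂ (i - t₁)) := by
  obtain ⟨h₁0, h₁t, h₁node, h₁step⟩ := h₁
  obtain ⟨h₂0, h₂t, h₂node, h₂step⟩ := h₂
  set R : ℕ → Finset α := fun i => if i ≤ t₁ then Q₁ i else Q₂ (i - t₁)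
  have hR₁ : ∀ j ≤ t₁, R j = Q₁ j := fun j hj => if_pos hj
  have hR₂ : ∀ j, t₁ ≤ j → R j = Q₂ (j - t₁) := by
    intro j hj
    by_cases hjt : j ≤ t₁
    · obtain rfl : j = t₁ := by omega
      simp [R, h₁t, h₂0]
    · exact if_neg hjt
  refine ⟨(hR₁ 0 (Nat.zero_le _)).trans h₁0, ?_, fun i hi => ?_, fun i hi => ?_⟩
  · rw [hR₂ _ (by omega), Nat.add_sub_cancel_left, h₂t]
  · rcases le_total i t₁ with hit | hti
    · exact hR₁ i hit ▸ h₁node i hit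
    · exact hR₂ i hti ▸ h₂node _ (by omega)
  · rcases lt_or_ge i t₁ with hit | hti
    · rw [hR₁ i hit.le, hR₁ (i + 1) hit]
      exact h₁step i hit
    · rw [hR₂ i hti, hR₂ (i + 1) (by omega), show i + 1 - t₁ = i - t₁ + 1 by omega]
      exact h₂step _ (by omega)

lemma symm {S T : Finset α} {t : ℕ} {Q : ℕ → Finset α} (h : ReconfSeq G k S T t Q) :
    ReconfSeq G k T S t (fun i => Q (t - i)) := by
  obtain ⟨h0, ht, hnode, hstep⟩ := h
  refine ⟨by simpa using ht, by simpa using h0, fun i _ => hnode _ (by omega), fun i hi => ?_⟩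
  dsimp only
  rw [show t - i = t - (i + 1) + 1 by omega, symmDiff_comm]
  exact hstep _ (by omega)

lemma exists_map {G' : SimpleGraph β} {k' c : ℕ} {φ : Finset α → Finset β}
    (hnode : ∀ X, IsVC G X ∧ X.card ≤ k → IsVC G' (φ X) ∧ (φ X).card ≤ k')
    (hstep : ∀ X Y, IsVC G X ∧ X.card ≤ k → IsVC G Y ∧ Y.card ≤ k →
      (symmDiff X Y).card = 1 → ∃ d ≤ c, ∃ Q', ReconfSeq G' k' (φ X) (φ Y) d Q')
    {S T : Finset α} {t : ℕ} {Q : ℕ → Finset α} (h : ReconfSeq G k S T t Q) :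
    ∃ s ≤ c * t, ∃ Q', ReconfSeq G' k' (φ S) (φ T) s Q' := by
  induction t generalizing T with
  | zero =>
    obtain ⟨h0, ht, hnode0, -⟩ := h
    obtain rfl : S = T := h0.symm.trans ht
    exact ⟨0, Nat.zero_le _, _, refl (hnode S (h0 ▸ hnode0 0 le_rfl))⟩
  | succ t ih =>
    obtain ⟨h0, ht, hnodes, hsteps⟩ := h
    obtain ⟨s, hs, Q₁, hQ₁⟩ := ih (T := Q t)
      ⟨h0, rfl, fun i hi => hnodes i (by omega), fun i hi => hsteps i (by omega)⟩
    obtain ⟨d, hd, Q₂, hQ₂⟩ := hstep (Q t) T (hnodes t (by omega)) (ht ▸ hnodes (t + 1) le_rfl)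
      (ht ▸ hsteps t (by omega))
    exact ⟨s + d, by rw [Nat.mul_succ]; omega, _, hQ₁.append hQ₂⟩

end ReconfSeq

lemma exists_reconfSeq_of_subset {A B : Finset α} (hAB : A ⊆ B) (hA : IsVC G A)
    (hB : B.card ≤ k) : ∃ Q, ReconfSeq G k A B (B \ A).card Q := by
  induction h : (B \ A).card generalizing B with
  | zero =>
    obtain rfl : B = A :=
      (Finset.sdiff_eq_empty_iff_subset.mp (Finset.card_eq_zero.mp h)).antisymm hAB
    exact ⟨_, ReconfSeq.refl ⟨hA, hB⟩⟩
  | succ m ih =>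
    obtain ⟨x, hx⟩ : (B \ A).Nonempty := Finset.card_pos.mp (by omega)
    obtain ⟨hxB, hxA⟩ := Finset.mem_sdiff.mp hx
    have hAB' : A ⊆ B.erase x := fun y hy =>
      Finset.mem_erase.mpr ⟨ne_of_mem_of_not_mem hy hxA, hAB hy⟩
    have hm : (B.erase x \ A).card = m := by
      rw [Finset.erase_sdiff_comm, Finset.card_erase_of_mem hx, h]; rfl
    obtain ⟨Q, hQ⟩ := ih hAB' (Finset.card_erase_le.trans hB) hm
    have hstep : (symmDiff (B.erase x) B).card = 1 := by
      rw [symmDiff_of_le (Finset.erase_subset x B), Finset.sdiff_erase_self hxB,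
        Finset.card_singleton]
    exact ⟨_, hQ.append (ReconfSeq.single ⟨hA.mono hAB', Finset.card_erase_le.trans hB⟩
      ⟨hA.mono hAB, hB⟩ hstep)⟩

lemma exists_reconfSeq_of_card_symmDiff_le_one {X Y : Finset α}
    (hX : IsVC G X ∧ X.card ≤ k) (hY : IsVC G Y ∧ Y.card ≤ k) (hXY : (symmDiff X Y).card ≤ 1) :
    ∃ d ≤ 1, ∃ Q, ReconfSeq G k X Y d Q := by
  rcases Nat.le_one_iff_eq_zero_or_eq_one.mp hXY with h | h
  · obtain rfl : X = Y := symmDiff_eq_bot.mp (Finset.card_eq_zero.mp h)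
    exact ⟨0, zero_le_one, _, ReconfSeq.refl hX⟩
  · exact ⟨1, le_rfl, _, ReconfSeq.single hX hY h⟩

lemma distR_le_of_reconfSeq {S T : Finset α} {t : ℕ} {Q : ℕ → Finset α}
    (h : ReconfSeq G k S T t Q) : distR G k S T ≤ t :=
  sInf_le ⟨t, rfl, Q, h⟩

lemma exists_reconfSeq_distR_eq {S T : Finset α} (h : distR G k S T ≠ ⊤) :
    ∃ t Q, ReconfSeq G k S T t Q ∧ distR G k S T = t := by
  have hne : {m : ℕ∞ | ∃ t : ℕ, (t : ℕ∞) = m ∧ ∃ Q, ReconfSeq G k S T t Q}.Nonempty := by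
    by_contra hempty
    exact h (by rw [distR, Set.not_nonempty_iff_eq_empty.mp hempty, sInf_empty])
  obtain ⟨t, ht, Q, hQ⟩ := csInf_mem hne
  exact ⟨t, Q, hQ, ht.symm⟩

variable {G' : SimpleGraph β} {k' : ℕ} {S T : Finset α} {S' T' : Finset β}

lemma distR_le_mul_of_forall_reconfSeq {c : ℕ} (hfin : distR G k S T ≠ ⊤)
    (hsim : ∀ t Q, ReconfSeq G k S T t Q → ∃ s ≤ c * t, ∃ Q', ReconfSeq G' k' S' T' s Q') :
    distR G' k' S' T' ≤ c * distR G k S T := by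
  obtain ⟨t, Q, hQ, hdist⟩ := exists_reconfSeq_distR_eq hfin
  obtain ⟨s, hs, Q', hQ'⟩ := hsim t Q hQ
  rw [hdist]
  exact (distR_le_of_reconfSeq hQ').trans (by exact_mod_cast hs)

lemma distR_le_of_forall_reconfSeq
    (hsim : ∀ s Q', ReconfSeq G' k' S' T' s Q' → ∃ t ≤ s, ∃ Q, ReconfSeq G k S T t Q) :
    distR G k S T ≤ distR G' k' S' T' := by
  refine le_sInf ?_
  rintro _ ⟨s, rfl, Q', hQ'⟩
  obtain ⟨t, ht, Q, hQ⟩ := hsim s Q' hQ'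
  exact (distR_le_of_reconfSeq hQ).trans (by exact_mod_cast ht)

end Reconfiguration

section Perturbation

variable {V : Type} [Fintype V] [DecidableEq V] {G : SimpleGraph V} {n k : ℕ} {Sstar : Finset V}

@[simp]
lemma mem_fcopy {v : V} {p : PV V n Sstar} : p ∈ fcopy n Sstar v ↔ p.1.1 = v := by
  simp [fcopy]

@[simp]
lemma mem_fset {X : Finset V} {p : PV V n Sstar} : p ∈ fset n Sstar X ↔ p.1.1 ∈ X := by
  simp [fset]

@[simp]
lemma mem_finv {Xh : Finset (PV V n Sstar)} {v : V} :
    v ∈ finv n Sstar Xh ↔ fcopy n Sstar v ⊆ Xh := by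
  simp [finv]

lemma fset_subset_fset {X Y : Finset V} (h : X ⊆ Y) : fset n Sstar X ⊆ fset n Sstar Y :=
  fun _ hp => mem_fset.mpr (h (mem_fset.mp hp))

lemma fset_sdiff {X Y : Finset V} : fset n Sstar (Y \ X) = fset n Sstar Y \ fset n Sstar X := by
  ext
  simp

lemma fset_finv_subset {Xh : Finset (PV V n Sstar)} : fset n Sstar (finv n Sstar Xh) ⊆ Xh :=
  fun _ hp => mem_finv.mp (mem_fset.mp hp) (mem_fcopy.mpr rfl)

lemma card_fcopy_le (v : V) : (fcopy n Sstar v).card ≤ 2 * n + 1 := by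
  simpa using Finset.card_le_card_of_injOn (fun p : PV V n Sstar => p.1.2)
    (fun _ _ => Finset.mem_coe.mpr (Finset.mem_univ _)) (t := Finset.univ)
    (fun p hp q hq hpq => Subtype.ext (Prod.ext
      ((mem_fcopy.mp hp).trans (mem_fcopy.mp hq).symm) hpq))

lemma le_card_fcopy (v : V) : 2 * n ≤ (fcopy n Sstar v).card := by
  simpa using Finset.card_le_card_of_injOn
    (fun i : Fin (2 * n) => (⟨(v, i.castLE (by omega)), fun _ => i.2⟩ : PV V n Sstar))
    (fun _ _ => mem_fcopy.mpr rfl) (s := Finset.univ)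
    (fun i _ j _ hij => Fin.ext (congrArg (fun p : PV V n Sstar => (p.1.2 : ℕ)) hij))

lemma card_fset {X : Finset V} : (fset n Sstar X).card = ∑ v ∈ X, (fcopy n Sstar v).card := by
  have hX : fset n Sstar X = X.biUnion (fcopy n Sstar) := by
    ext p
    simp
  rw [hX, Finset.card_biUnion]
  intro u _ v _ huv
  exact Finset.disjoint_left.mpr fun p hu hv => huv ((mem_fcopy.mp hu).symm.trans (mem_fcopy.mp hv))

lemma card_fset_le {X : Finset V} : (fset n Sstar X).card ≤ (2 * n + 1) * X.card := by
  rw [card_fset, mul_comm, ← smul_eq_mul]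
  exact Finset.sum_le_card_nsmul _ _ _ fun v _ => card_fcopy_le v

lemma le_card_fset {X : Finset V} : 2 * n * X.card ≤ (fset n Sstar X).card := by
  rw [card_fset, mul_comm, ← smul_eq_mul]
  exact Finset.card_nsmul_le_sum _ _ _ fun v _ => le_card_fcopy v

lemma IsVC.fset {X : Finset V} (h : IsVC G X) : IsVC (perturb G n Sstar) (fset n Sstar X) :=
  fun _ _ hpq => (h hpq).imp mem_fset.mpr mem_fset.mpr

lemma IsVC.finv {Xh : Finset (PV V n Sstar)} (h : IsVC (perturb G n Sstar) Xh) :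
    IsVC G (finv n Sstar Xh) := by
  intro u v huv
  by_contra! hc
  obtain ⟨p, hp, hpX⟩ := Finset.not_subset.mp (mt mem_finv.mpr hc.1)
  obtain ⟨q, hq, hqX⟩ := Finset.not_subset.mp (mt mem_finv.mpr hc.2)
  have hpq : (perturb G n Sstar).Adj p q := by
    show G.Adj p.1.1 q.1.1
    rwa [mem_fcopy.mp hp, mem_fcopy.mp hq]
  exact (h hpq).elim hpX hqX

lemma finv_fset (hn : Fintype.card V = n) {X : Finset V} : finv n Sstar (fset n Sstar X) = X := by
  ext v
  have hn1 : 1 ≤ n := hn ▸ Fintype.card_pos_iff.mpr ⟨v⟩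
  refine ⟨fun hv => ?_, fun hv => mem_finv.mpr fun q hq => mem_fset.mpr (mem_fcopy.mp hq ▸ hv)⟩
  exact mem_fset.mp (mem_finv.mp hv
    ((mem_fcopy (p := ⟨(v, 0), fun _ => by rw [Fin.val_zero]; omega⟩)).mpr rfl))

lemma card_finv_le (hn : Fintype.card V = n) {Xh : Finset (PV V n Sstar)}
    (h : Xh.card ≤ 2 * n * k + 2 * n - 1) : (finv n Sstar Xh).card ≤ k := by
  have hle : 2 * n * (finv n Sstar Xh).card ≤ Xh.card :=
    le_card_fset.trans (Finset.card_le_card fset_finv_subset)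
  have hlen : (finv n Sstar Xh).card ≤ n := (Finset.card_le_univ _).trans hn.le
  by_contra! hk
  have := Nat.mul_le_mul_left (2 * n) (Nat.succ_le_of_lt hk)
  rw [Nat.mul_succ] at this
  omega

lemma card_fset_le_of_card_le (hn : Fintype.card V = n) {X : Finset V} (h : X.card ≤ k) :
    (fset n Sstar X).card ≤ 2 * n * k + 2 * n - 1 := by
  have hlen : X.card ≤ n := (Finset.card_le_univ _).trans hn.le
  have hmul : 2 * n * X.card ≤ 2 * n * k := Nat.mul_le_mul_left (2 * n) h
  have hfset : (fset n Sstar X).card ≤ 2 * n * X.card + X.card := card_fset_le.trans_eq (by ring)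
  -- for `n = 0` the truncated subtraction makes the bound `0`, and then `X` is empty
  have hzero : n = 0 → 2 * n * k = 0 := by rintro rfl; simp
  generalize 2 * n * X.card = a, 2 * n * k = b at hmul hfset hzero ⊢
  omega

lemma card_symmDiff_finv_le_one {Xh Yh : Finset (PV V n Sstar)}
    (h : (symmDiff Xh Yh).card = 1) :
    (symmDiff (finv n Sstar Xh) (finv n Sstar Yh)).card ≤ 1 := by
  obtain ⟨p, hp⟩ := Finset.card_eq_one.mp h
  have key : ∀ {Ah Bh : Finset (PV V n Sstar)}, symmDiff Ah Bh = {p} →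
      ∀ v ∈ finv n Sstar Ah, v ∉ finv n Sstar Bh → v = p.1.1 := by
    intro Ah Bh hAB v hvA hvB
    obtain ⟨q, hq, hqB⟩ := Finset.not_subset.mp (mt mem_finv.mpr hvB)
    have hqp : q ∈ symmDiff Ah Bh := Finset.mem_symmDiff.mpr (Or.inl ⟨mem_finv.mp hvA hq, hqB⟩)
    rw [hAB, Finset.mem_singleton] at hqp
    rw [← mem_fcopy.mp hq, hqp]
  refine (Finset.card_le_card (s := _) (t := {p.1.1}) fun v hv => ?_).trans
    (Finset.card_singleton _).le
  rw [Finset.mem_singleton]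
  rcases Finset.mem_symmDiff.mp hv with ⟨hX, hY⟩ | ⟨hY, hX⟩
  · exact key hp v hX hY
  · exact key (symmDiff_comm Xh Yh ▸ hp) v hY hX

lemma exists_reconfSeq_fset_of_card_symmDiff_eq_one (hn : Fintype.card V = n) {X Y : Finset V}
    (hX : IsVC G X ∧ X.card ≤ k) (hY : IsVC G Y ∧ Y.card ≤ k) (hXY : (symmDiff X Y).card = 1) :
    ∃ d ≤ 2 * n + 1, ∃ Qh, ReconfSeq (perturb G n Sstar) (2 * n * k + 2 * n - 1)
      (fset n Sstar X) (fset n Sstar Y) d Qh := by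
  have grow : ∀ {A B : Finset V}, A ⊆ B → (B \ A).card = 1 → IsVC G A → B.card ≤ k →
      ∃ d ≤ 2 * n + 1, ∃ Qh, ReconfSeq (perturb G n Sstar) (2 * n * k + 2 * n - 1)
        (fset n Sstar A) (fset n Sstar B) d Qh := by
    intro A B hAB hcard hA hB
    obtain ⟨Qh, hQh⟩ := exists_reconfSeq_of_subset (fset_subset_fset hAB) hA.fset
      (card_fset_le_of_card_le hn hB)
    refine ⟨_, ?_, Qh, hQh⟩
    rw [← fset_sdiff]
    exact card_fset_le.trans_eq (by rw [hcard, mul_one])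
  rcases card_symmDiff_eq_one_iff.mp hXY with ⟨hsub, hcard⟩ | ⟨hsub, hcard⟩
  · exact grow hsub hcard hX.1 hY.2
  · obtain ⟨d, hd, Qh, hQh⟩ := grow hsub hcard hY.1 hX.2
    exact ⟨d, hd, _, hQh.symm⟩

end Perturbation

theorem stmt6_general {V : Type} [Fintype V] [DecidableEq V] (G : SimpleGraph V)
    (n : ℕ) (hn : Fintype.card V = n)
    (Sstar : Finset V) (k : ℕ)
    (S T : Finset V)
    (hfin : distR G k S T ≠ ⊤) :
    distR (perturb G n Sstar) (2 * n * k + 2 * n - 1) (fset n Sstar S) (fset n Sstar T) ≠ ⊤ ∧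
    distR G k S T ≤
      distR (perturb G n Sstar) (2 * n * k + 2 * n - 1) (fset n Sstar S) (fset n Sstar T) ∧
    distR (perturb G n Sstar) (2 * n * k + 2 * n - 1) (fset n Sstar S) (fset n Sstar T) ≤
      ((2 * n + 1 : ℕ) : ℕ∞) * distR G k S T := by
  have hupper : distR (perturb G n Sstar) (2 * n * k + 2 * n - 1) (fset n Sstar S)
      (fset n Sstar T) ≤ ((2 * n + 1 : ℕ) : ℕ∞) * distR G k S T :=
    distR_le_mul_of_forall_reconfSeq hfin fun _ _ hQ =>
      hQ.exists_map (fun _ hX => ⟨hX.1.fset, card_fset_le_of_card_le hn hX.2⟩)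
        (fun _ _ hX hY hXY => exists_reconfSeq_fset_of_card_symmDiff_eq_one hn hX hY hXY)
  have hlower : distR G k S T ≤
      distR (perturb G n Sstar) (2 * n * k + 2 * n - 1) (fset n Sstar S) (fset n Sstar T) := by
    refine distR_le_of_forall_reconfSeq fun _ _ hQh => ?_
    have hnode : ∀ Xh, IsVC (perturb G n Sstar) Xh ∧ Xh.card ≤ 2 * n * k + 2 * n - 1 →
        IsVC G (finv n Sstar Xh) ∧ (finv n Sstar Xh).card ≤ k :=
      fun _ hXh => ⟨hXh.1.finv, card_finv_le hn hXh.2⟩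
    simpa only [finv_fset hn, one_mul] using hQh.exists_map (c := 1) hnode
      fun _ _ hXh hYh hXY => exists_reconfSeq_of_card_symmDiff_le_one (hnode _ hXh) (hnode _ hYh)
        (card_symmDiff_finv_le_one hXY)
  exact ⟨ne_top_of_le_ne_top (WithTop.mul_ne_top (ENat.natCast_ne_top _) hfin) hupper,
    hlower, hupper⟩

/-- With `H` the perturbation of the `n`-vertex bipartite
graph `G` w.r.t. a vertex cover `S*`, and `μ = 2nk + 2n − 1`: for all vertex
covers `S`, `T` of `G` of size at most `k`, if `dist_{R_k(G)}(S,T)` is finite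
then `dist_{R_μ(H)}(f(S), f(T))` is finite and
`dist_{R_k(G)}(S,T) ≤ dist_{R_μ(H)}(f(S), f(T)) ≤ (2n+1)·dist_{R_k(G)}(S,T)`. -/
theorem stmt6 {V : Type} [Fintype V] [DecidableEq V] (G : SimpleGraph V)
    (hbip : G.Colorable 2) (n : ℕ) (hn : Fintype.card V = n)
    (Sstar : Finset V) (hSstar : IsVC G Sstar) (k : ℕ) (hk : 0 < k)
    (S T : Finset V) (hS : IsVC G S) (hT : IsVC G T)
    (hSk : S.card ≤ k) (hTk : T.card ≤ k)
    (hfin : distR G k S T ≠ ⊤) :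
    distR (perturb G n Sstar) (2 * n * k + 2 * n - 1) (fset n Sstar S) (fset n Sstar T) ≠ ⊤ ∧
    distR G k S T ≤
      distR (perturb G n Sstar) (2 * n * k + 2 * n - 1) (fset n Sstar S) (fset n Sstar T) ∧
    distR (perturb G n Sstar) (2 * n * k + 2 * n - 1) (fset n Sstar S) (fset n Sstar T) ≤
      ((2 * n + 1 : ℕ) : ℕ∞) * distR G k S T :=
  stmt6_general G n hn Sstar k S T hfin
end

section
/- Let G be a bipartite graph, k a positive integer, and S and T two vertex covers of G of size at most k. Let η be an edit sequence valid at S with η(S) = T, and let (C, H) be an η-local crown. If H ⊆ S, C ∩ S = ∅, H ⊆ T, and C ∩ T = ∅, then η is not a shortest edit sequence transforming S to T: there exists a strictly shorter edit sequence valid at S transforming S to T. -/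
/-- An edit marker: `(v, true)` adds the vertex `v`, `(v, false)` removes it. -/
abbrev Edit (α : Type*) := α × Bool

/-- Apply a single edit operation to a set. -/
def applyEdit {α : Type*} [DecidableEq α] (Q : Finset α) (e : Edit α) : Finset α :=
  if e.2 then insert e.1 Q else Q.erase e.1

/-- Apply an edit sequence to a set. -/
def applySeq {α : Type*} [DecidableEq α] (Q : Finset α) : List (Edit α) → Finset α
  | [] => Q
  | e :: es => applySeq (applyEdit Q e) es

/-- An edit sequence is valid at `Q`: each addition adds a vertex not already
present, each removal removes a present vertex, and every intermediate set is
a vertex cover of `G` of size at most `k`. -/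
def ValidAt {α : Type*} [DecidableEq α] (G : SimpleGraph α) (k : ℕ) :
    Finset α → List (Edit α) → Prop
  | _, [] => True
  | Q, e :: es =>
      (e.2 = true → e.1 ∉ Q) ∧ (e.2 = false → e.1 ∈ Q) ∧
      IsVC G (applyEdit Q e) ∧ (applyEdit Q e).card ≤ k ∧ ValidAt G k (applyEdit Q e) es

/-- `add(η)`: the set of vertices added by the edit sequence `η`. -/
def addSet {α : Type*} [DecidableEq α] (η : List (Edit α)) : Finset α :=
  ((η.filter (fun e => e.2)).map Prod.fst).toFinset

/-- `rem(η)`: the set of vertices removed by the edit sequence `η`. -/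
def remSet {α : Type*} [DecidableEq α] (η : List (Edit α)) : Finset α :=
  ((η.filter (fun e => !e.2)).map Prod.fst).toFinset

/-- `touch(η)`: the set of vertices touched (added or removed) by `η`. -/
def touchSet {α : Type*} [DecidableEq α] (η : List (Edit α)) : Finset α :=
  (η.map Prod.fst).toFinset

/-! Drop from `η` every edit at a vertex of `C ∪ H` and follow the swapped sets `(Q \ C) ∪ H`
along the way. A neighbour of `C` outside `H` is untouched by `η` (it would otherwise lie in `H`)
and lies in `S` (since `C ∩ S = ∅`), so it stays in every intermediate cover; hence every swapped
set is again a vertex cover, and the matching of `H` into `C` shows it is no larger. The swap fixes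
`S` and `T`, and since `C ≠ ∅` lies in `touch(η)` at least one edit is dropped. -/

section CrownSwap

variable {α : Type*} [DecidableEq α]

def crownSwap (C H Q : Finset α) : Finset α := (Q \ C) ∪ H

lemma crownSwap_eq_self {C H Q : Finset α} (hH : H ⊆ Q) (hC : Disjoint C Q) :
    crownSwap C H Q = Q := by
  rw [crownSwap, Finset.union_eq_left.mpr (Finset.subset_sdiff.mpr ⟨hH, ?_⟩),
    Finset.sdiff_eq_self_of_disjoint hC.symm]
  exact Finset.disjoint_of_subset_left hH hC.symm

lemma touchSet_cons (e : Edit α) (l : List (Edit α)) :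
    touchSet (e :: l) = insert e.1 (touchSet l) := by
  simp [touchSet]

lemma mem_applyEdit_of_ne {Q : Finset α} {e : Edit α} {v : α} (hv : v ≠ e.1) :
    v ∈ applyEdit Q e ↔ v ∈ Q := by
  unfold applyEdit
  split <;> simp [hv]

lemma applyEdit_crownSwap {C H : Finset α} (Q : Finset α) {e : Edit α} (he : e.1 ∉ C ∪ H) :
    applyEdit (crownSwap C H Q) e = crownSwap C H (applyEdit Q e) := by
  rw [Finset.mem_union, not_or] at he
  cases hb : e.2 <;> ext v <;> by_cases hv : v = e.1 <;>
    simp [crownSwap, applyEdit, hb, hv, he.1, he.2]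

lemma crownSwap_applyEdit_of_mem {C H : Finset α} (Q : Finset α) {e : Edit α}
    (he : e.1 ∈ C ∪ H) : crownSwap C H (applyEdit Q e) = crownSwap C H Q := by
  ext v
  by_cases hv : v = e.1
  · subst hv
    rw [Finset.mem_union] at he
    by_cases hH : e.1 ∈ H <;> simp_all [crownSwap]
  · simp only [crownSwap, Finset.mem_union, Finset.mem_sdiff, mem_applyEdit_of_ne hv]

lemma applySeq_crownSwap_filter (C H : Finset α) (l : List (Edit α)) (Q : Finset α) :
    applySeq (crownSwap C H Q) (l.filter fun e => e.1 ∉ C ∪ H) =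
      crownSwap C H (applySeq Q l) := by
  induction l generalizing Q with
  | nil => rfl
  | cons e es ih =>
    by_cases he : e.1 ∈ C ∪ H
    · rw [List.filter_cons_of_neg (by simpa only [decide_eq_true_eq, not_not] using he),
        ← crownSwap_applyEdit_of_mem Q he]
      exact ih _
    · rw [List.filter_cons_of_pos (by simpa only [decide_eq_true_eq] using he)]
      rw [applySeq, applyEdit_crownSwap Q he]
      exact ih _

variable {G : SimpleGraph α} {C H : Finset α}

lemma isVC_crownSwap {Q : Finset α} (hQ : IsVC G Q) (hCind : ∀ u ∈ C, ∀ v ∈ C, ¬ G.Adj u v)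
    (hN : ∀ c ∈ C, ∀ w, G.Adj c w → w ∈ H ∨ w ∈ Q) :
    IsVC G (crownSwap C H Q) := by
  have key : ∀ ⦃u v⦄, G.Adj u v → u ∈ C → v ∈ crownSwap C H Q := fun u v huv hu => by
    have hv : v ∉ C := fun hv => hCind u hu v hv huv
    rcases hN u hu v huv with h | h
    · exact Finset.mem_union_right _ h
    · exact Finset.mem_union_left _ (Finset.mem_sdiff.mpr ⟨h, hv⟩)
  intro u v huv
  by_cases hu : u ∈ C
  · exact Or.inr (key huv hu)
  by_cases hv : v ∈ C
  · exact Or.inl (key huv.symm hv)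
  rcases hQ huv with h | h
  · exact Or.inl (Finset.mem_union_left _ (Finset.mem_sdiff.mpr ⟨h, hu⟩))
  · exact Or.inr (Finset.mem_union_left _ (Finset.mem_sdiff.mpr ⟨h, hv⟩))

lemma card_crownSwap_le {Q : Finset α} (hQ : IsVC G Q) (hCH : Disjoint C H) {M : α → α}
    (hMinj : Set.InjOn M ↑H) (hMC : ∀ u ∈ H, M u ∈ C ∧ G.Adj u (M u)) :
    (crownSwap C H Q).card ≤ Q.card := by
  have hsub : crownSwap C H Q ⊆ (Q \ C) ∪ (H \ Q) := by
    intro v hv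
    rcases Finset.mem_union.mp hv with h | h
    · exact Finset.mem_union_left _ h
    by_cases hvQ : v ∈ Q
    · exact Finset.mem_union_left _
        (Finset.mem_sdiff.mpr ⟨hvQ, fun hc => Finset.disjoint_left.mp hCH hc h⟩)
    · exact Finset.mem_union_right _ (Finset.mem_sdiff.mpr ⟨h, hvQ⟩)
  -- an uncovered `u ∈ H` forces its partner `M u ∈ C` into the cover `Q`
  have hmatch : (H \ Q).card ≤ (Q ∩ C).card := by
    refine Finset.card_le_card_of_injOn M (fun u hu => ?_) (hMinj.mono fun u hu => ?_)
    · obtain ⟨huH, huQ⟩ := Finset.mem_sdiff.mp hu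
      obtain ⟨hMu, hadj⟩ := hMC u huH
      exact Finset.mem_inter.mpr ⟨(hQ hadj).resolve_left huQ, hMu⟩
    · exact (Finset.mem_sdiff.mp hu).1
  calc (crownSwap C H Q).card ≤ (Q \ C).card + (H \ Q).card :=
        (Finset.card_le_card hsub).trans (Finset.card_union_le _ _)
    _ ≤ (Q \ C).card + (Q ∩ C).card := by gcongr
    _ = Q.card := by rw [add_comm, Finset.card_inter_add_card_sdiff]

lemma ValidAt.crownSwap_filter {k : ℕ} (hCH : Disjoint C H)
    (hCind : ∀ u ∈ C, ∀ v ∈ C, ¬ G.Adj u v) {M : α → α} (hMinj : Set.InjOn M ↑H)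
    (hMC : ∀ u ∈ H, M u ∈ C ∧ G.Adj u (M u)) {l : List (Edit α)} {Q : Finset α}
    (hl : ValidAt G k Q l)
    (hN : ∀ c ∈ C, ∀ w, G.Adj c w → w ∈ H ∨ (w ∈ Q ∧ w ∉ touchSet l)) :
    ValidAt G k (crownSwap C H Q) (l.filter fun e => e.1 ∉ C ∪ H) := by
  induction l generalizing Q with
  | nil => trivial
  | cons e es ih =>
    obtain ⟨hadd, hrem, hvc, hcard, hes⟩ := hl
    have hN' : ∀ c ∈ C, ∀ w, G.Adj c w → w ∈ H ∨ (w ∈ applyEdit Q e ∧ w ∉ touchSet es) := by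
      intro c hc w hcw
      refine (hN c hc w hcw).imp_right fun ⟨hwQ, hwt⟩ => ?_
      rw [touchSet_cons, Finset.mem_insert, not_or] at hwt
      exact ⟨(mem_applyEdit_of_ne hwt.1).mpr hwQ, hwt.2⟩
    have hrest := ih hes hN'
    by_cases he : e.1 ∈ C ∪ H
    · rwa [List.filter_cons_of_neg (by simpa only [decide_eq_true_eq, not_not] using he),
        ← crownSwap_applyEdit_of_mem Q he]
    rw [List.filter_cons_of_pos (by simpa only [decide_eq_true_eq] using he)]
    have hswap := applyEdit_crownSwap Q he
    rw [Finset.mem_union, not_or] at he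
    refine ⟨fun hb hmem => ?_, fun hb => ?_, ?_⟩
    · rcases Finset.mem_union.mp hmem with h | h
      · exact hadd hb (Finset.mem_sdiff.mp h).1
      · exact he.2 h
    · exact Finset.mem_union_left _ (Finset.mem_sdiff.mpr ⟨hrem hb, he.1⟩)
    rw [hswap]
    exact ⟨isVC_crownSwap hvc hCind fun c hc w hcw => (hN' c hc w hcw).imp_right And.left,
      (card_crownSwap_le hvc hCH hMinj hMC).trans hcard, hrest⟩

end CrownSwap

theorem stmt11_general {V : Type} [DecidableEq V] (G : SimpleGraph V)
    (k : ℕ) (S T : Finset V)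
    (hS : IsVC G S)
    (η : List (Edit V)) (hηvalid : ValidAt G k S η) (hηT : applySeq S η = T)
    (C H : Finset V)
    -- `(C, H)` is a crown in the subgraph of `G` induced by `touch(η)`:
    (hCsub : C ⊆ touchSet η) (hCH : Disjoint C H)
    (hCne : C.Nonempty)
    (hCind : ∀ u ∈ C, ∀ v ∈ C, ¬ G.Adj u v)
    (hHN : ∀ u : V, u ∈ H ↔ (u ∈ touchSet η ∧ u ∉ C ∧ ∃ c ∈ C, G.Adj c u))
    (hM : ∃ M : V → V, Set.InjOn M ↑H ∧ ∀ u ∈ H, M u ∈ C ∧ G.Adj u (M u))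
    -- position of the crown relative to `S` and `T`:
    (hHS : H ⊆ S) (hCS : Disjoint C S) (hHT : H ⊆ T) (hCT : Disjoint C T) :
    ∃ η' : List (Edit V), ValidAt G k S η' ∧ applySeq S η' = T ∧ η'.length < η.length := by
  obtain ⟨M, hMinj, hMC⟩ := hM
  have hN : ∀ c ∈ C, ∀ w, G.Adj c w → w ∈ H ∨ (w ∈ S ∧ w ∉ touchSet η) := by
    intro c hc w hcw
    have hwS : w ∈ S := (hS hcw).resolve_left (Finset.disjoint_left.mp hCS hc)
    by_cases hwt : w ∈ touchSet η
    · exact Or.inl ((hHN w).mpr ⟨hwt, fun hw => hCind c hc w hw hcw, c, hc, hcw⟩)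
    · exact Or.inr ⟨hwS, hwt⟩
  have hvalid := hηvalid.crownSwap_filter hCH hCind hMinj hMC hN
  have hresult := applySeq_crownSwap_filter C H η S
  rw [crownSwap_eq_self hHS hCS] at hvalid hresult
  rw [hηT, crownSwap_eq_self hHT hCT] at hresult
  refine ⟨_, hvalid, hresult, List.length_filter_lt_length_iff_exists.mpr ?_⟩
  obtain ⟨c, hc⟩ := hCne
  obtain ⟨e, he, rfl⟩ : ∃ e ∈ η, e.1 = c := by simpa [touchSet] using hCsub hc
  exact ⟨e, he, by simpa only [decide_eq_true_eq, not_not] using Finset.mem_union_left H hc⟩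

/-- Let `G` be bipartite, `S` and `T` vertex covers of size
at most `k`, and `η` an edit sequence valid at `S` with `η(S) = T`.  Let
`(C, H)` be an `η`-local crown (a crown in the subgraph of `G` induced by
`touch(η)`).  If `H ⊆ S`, `C ∩ S = ∅`, `H ⊆ T` and `C ∩ T = ∅`, then `η` is not
a shortest edit sequence from `S` to `T`: there is a strictly shorter valid
edit sequence transforming `S` into `T`. -/
theorem stmt11 {V : Type} [DecidableEq V] (G : SimpleGraph V) (hbip : G.Colorable 2)
    (k : ℕ) (hk : 0 < k) (S T : Finset V)
    (hS : IsVC G S) (hSk : S.card ≤ k) (hT : IsVC G T) (hTk : T.card ≤ k)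
    (η : List (Edit V)) (hηvalid : ValidAt G k S η) (hηT : applySeq S η = T)
    (C H : Finset V)
    -- `(C, H)` is a crown in the subgraph of `G` induced by `touch(η)`:
    (hCsub : C ⊆ touchSet η) (hHsub : H ⊆ touchSet η) (hCH : Disjoint C H)
    (hCne : C.Nonempty)
    (hCind : ∀ u ∈ C, ∀ v ∈ C, ¬ G.Adj u v)
    (hHN : ∀ u : V, u ∈ H ↔ (u ∈ touchSet η ∧ u ∉ C ∧ ∃ c ∈ C, G.Adj c u))
    (hM : ∃ M : V → V, Set.InjOn M ↑H ∧ ∀ u ∈ H, M u ∈ C ∧ G.Adj u (M u))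
    -- position of the crown relative to `S` and `T`:
    (hHS : H ⊆ S) (hCS : Disjoint C S) (hHT : H ⊆ T) (hCT : Disjoint C T) :
    ∃ η' : List (Edit V), ValidAt G k S η' ∧ applySeq S η' = T ∧ η'.length < η.length :=
  stmt11_general G k S T hS η hηvalid hηT C H hCsub hCH hCne hCind hHN hM hHS hCS hHT hCT
end
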